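/- Let m < p be mesh patterns with p covering m in the mesh pattern poset. Then the cover m ⋖ p is impure (i.e. dim(p) − dim(m) > 1, where dim(q) = |cl(q)| + |sh(q)|) if and only if every occurrence of m in p uses all the shaded boxes of p and is obtained by deleting a point of p whose deletion merges shadings. -/

import Mathlib

/-!
# The poset of mesh patterns

A mesh pattern is a permutation of `{1, ..., len}` together with a set of shaded
boxes in the `(len+1) × (len+1)` grid (boxes are indexed by their south-west corner,
so boxes have coordinates in `{0, ..., len} × {0, ..., len}`).

We normalise the permutation as a function `ℕ → ℕ` (using 1-based indexing) which is
`0` outside of `[1, len]`; this makes equality of mesh patterns coincide with equality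
of the underlying data.
-/

structure MeshPattern where
  len : ℕ
  perm : ℕ → ℕ
  sh : Finset (ℕ × ℕ)
  perm_mem : ∀ i, 1 ≤ i → i ≤ len → 1 ≤ perm i ∧ perm i ≤ len
  perm_zero : ∀ i, i = 0 ∨ len < i → perm i = 0
  perm_inj : ∀ i j, 1 ≤ i → i ≤ len → 1 ≤ j → j ≤ len → perm i = perm j → i = j
  perm_surj : ∀ v, 1 ≤ v → v ≤ len → ∃ i, 1 ≤ i ∧ i ≤ len ∧ perm i = v
  sh_mem : ∀ q ∈ sh, q.1 ≤ len ∧ q.2 ≤ len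

namespace MeshPattern

/-- The (1-based) position of the value `v` in the underlying permutation of `m`. -/
noncomputable def pos (m : MeshPattern) (v : ℕ) : ℕ := Function.invFun m.perm v

/-- The dimension of a mesh pattern: length of the permutation plus number of shaded boxes. -/
def dim (m : MeshPattern) : ℕ := m.len + m.sh.card

/-- Given (the position map of an occurrence) `η` of `m` in `p`, the extended column
boundary map: pattern column boundary `i` (for `0 ≤ i ≤ m.len + 1`) is sent to the
corresponding column boundary in `p`.  Boxes of `p` with first coordinate `a` satisfying
`colExt m p η i ≤ a < colExt m p η (i+1)` are exactly the boxes lying horizontally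
within the region corresponding to pattern boxes with first coordinate `i`. -/
def colExt (m p : MeshPattern) (η : ℕ → ℕ) (i : ℕ) : ℕ :=
  if i = 0 then 0 else if i ≤ m.len then η i else p.len + 1

/-- The analogous extended row (value) boundary map. -/
noncomputable def valExt (m p : MeshPattern) (η : ℕ → ℕ) (j : ℕ) : ℕ :=
  if j = 0 then 0 else if j ≤ m.len then p.perm (η (m.pos j)) else p.len + 1

/-- The box `(a, b)` of `p` lies in the region `R_η(i, j)` of the box `(i, j)` of `m`. -/
def inRegion (m p : MeshPattern) (η : ℕ → ℕ) (i j a b : ℕ) : Prop :=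
  colExt m p η i ≤ a ∧ a < colExt m p η (i + 1) ∧
    valExt m p η j ≤ b ∧ b < valExt m p η (j + 1)

/-- The point of `p` at position `y` lies in the open interior of the region `R_η(i, j)`. -/
def interiorPt (m p : MeshPattern) (η : ℕ → ℕ) (i j y : ℕ) : Prop :=
  colExt m p η i < y ∧ y < colExt m p η (i + 1) ∧
    valExt m p η j < p.perm y ∧ p.perm y < valExt m p η (j + 1)

/-- `η` is an occurrence of the mesh pattern `m` in the mesh pattern `p`:
a (normalised) strictly increasing choice of positions realising the underlying
classical pattern, such that for every shaded box of `m` the corresponding region of `p`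
contains no point of `p` in its interior and consists entirely of shaded boxes of `p`. -/
structure IsOcc (m p : MeshPattern) (η : ℕ → ℕ) : Prop where
  zero : ∀ i, i = 0 ∨ m.len < i → η i = 0
  mem : ∀ i, 1 ≤ i → i ≤ m.len → 1 ≤ η i ∧ η i ≤ p.len
  mono : ∀ i j, 1 ≤ i → i < j → j ≤ m.len → η i < η j
  pattern : ∀ i j, 1 ≤ i → i ≤ m.len → 1 ≤ j → j ≤ m.len →
    (m.perm i < m.perm j ↔ p.perm (η i) < p.perm (η j))
  no_point : ∀ q ∈ m.sh, ∀ y, 1 ≤ y → y ≤ p.len → ¬ interiorPt m p η q.1 q.2 y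
  shaded : ∀ q ∈ m.sh, ∀ a b, inRegion m p η q.1 q.2 a b → (a, b) ∈ p.sh

/-- The mesh pattern poset: `m ≤ p` iff there is an occurrence of `m` in `p`. -/
instance : LE MeshPattern := ⟨fun m p => ∃ η, IsOcc m p η⟩

instance : LT MeshPattern := ⟨fun m p => m ≤ p ∧ m ≠ p⟩

/-- `b` covers `a` in the mesh pattern poset. -/
def CovByM (a b : MeshPattern) : Prop := a < b ∧ ¬ ∃ z, a < z ∧ z < b

open Classical in
/-- The Möbius function of a (locally finite) partial order `r`, computed with a fuel
parameter: `muFuel r n a b` is the Möbius function `μ(a, b)` provided `n` is at least the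
length of the longest chain from `a` to `b` (with the convention `μ(a, b) = 0` if
`¬ r a b`). -/
noncomputable def muFuel {α : Type*} (r : α → α → Prop) : ℕ → α → α → ℤ
  | 0, a, b => if a = b then 1 else 0
  | n + 1, a, b =>
      if a = b then 1
      else if r a b then - ∑ᶠ c ∈ {c | r a c ∧ r c b ∧ c ≠ b}, muFuel r n a c
      else 0

/-- The Möbius function of the mesh pattern poset.  Since every chain from `m` to `p` has
length at most `dim p`, the fuel `dim p + 1` is sufficient, so this is the genuine Möbius
function: `mu m m = 1`, `mu m p = -∑_{m ≤ c < p} mu m c` for `m < p`, and `mu m p = 0`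
when `m ≰ p`. -/
noncomputable def mu (m p : MeshPattern) : ℤ := muFuel (· ≤ ·) (p.dim + 1) m p

/-- The classical permutation poset `𝓟`, realised as the subposet of unshaded mesh
patterns (for unshaded patterns, mesh occurrence is exactly classical pattern
containment).  Its Möbius function. -/
noncomputable def muP (σ π : {m : MeshPattern // m.sh = ∅}) : ℤ :=
  muFuel (· ≤ ·) (π.1.len + 1) σ π

/-- The mesh pattern with underlying identity permutation of length `n`
and shaded boxes `s`. -/
def ofId (n : ℕ) (s : Finset (ℕ × ℕ)) (hs : ∀ q ∈ s, q.1 ≤ n ∧ q.2 ≤ n) : MeshPattern where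
  len := n
  perm := fun i => if 1 ≤ i ∧ i ≤ n then i else 0
  sh := s
  perm_mem := by intro i h1 h2; rw [if_pos ⟨h1, h2⟩]; omega
  perm_zero := by intro i h; rw [if_neg]; omega
  perm_inj := by intro i j h1 h2 h3 h4 h; rw [if_pos ⟨h1, h2⟩, if_pos ⟨h3, h4⟩] at h; omega
  perm_surj := by
    intro v h1 h2; exact ⟨v, h1, h2, by rw [if_pos ⟨h1, h2⟩]⟩
  sh_mem := hs

/-- The mesh pattern with underlying decreasing permutation of length `n`
and shaded boxes `s`. -/
def ofRev (n : ℕ) (s : Finset (ℕ × ℕ)) (hs : ∀ q ∈ s, q.1 ≤ n ∧ q.2 ≤ n) : MeshPattern where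
  len := n
  perm := fun i => if 1 ≤ i ∧ i ≤ n then n + 1 - i else 0
  sh := s
  perm_mem := by intro i h1 h2; rw [if_pos ⟨h1, h2⟩]; omega
  perm_zero := by intro i h; rw [if_neg]; omega
  perm_inj := by intro i j h1 h2 h3 h4 h; rw [if_pos ⟨h1, h2⟩, if_pos ⟨h3, h4⟩] at h; omega
  perm_surj := by
    intro v h1 h2
    exact ⟨n + 1 - v, by omega, by omega, by rw [if_pos ⟨by omega, by omega⟩]; omega⟩
  sh_mem := hs

/-- The unshaded singleton mesh pattern `1^∅`. -/
def one0 : MeshPattern := ofId 1 ∅ (by simp)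

/-- The empty mesh pattern `ε^∅`. -/
def eps0 : MeshPattern := ofId 0 ∅ (by simp)

/-- The empty mesh pattern `ε^{(0,0)}` with its single box shaded. -/
def eps00 : MeshPattern := ofId 0 {(0, 0)} (by decide)

/-- The singleton mesh patterns `1^{(a,b)}` for `a b ∈ {0,1}`. -/
def one00 : MeshPattern := ofId 1 {(0, 0)} (by decide)
def one10 : MeshPattern := ofId 1 {(1, 0)} (by decide)
def one01 : MeshPattern := ofId 1 {(0, 1)} (by decide)
def one11 : MeshPattern := ofId 1 {(1, 1)} (by decide)

/-- The mesh pattern `21^{(0,0),(1,0)}`. -/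
def pat21 : MeshPattern := ofRev 2 {(0, 0), (1, 0)} (by decide)

/-- Replace the shading of `p` by a subset `A ⊆ sh p` (same underlying permutation):
this is the mesh pattern `(cl p)^A`. -/
def reshade (p : MeshPattern) (A : Finset (ℕ × ℕ)) (hA : A ⊆ p.sh) : MeshPattern :=
  { p with sh := A, sh_mem := fun q hq => p.sh_mem q (hA hq) }

/-- The occurrence `η` of `s` in `p` uses the shaded box `(a, b) ∈ sh p`. -/
def UsesBox (s p : MeshPattern) (η : ℕ → ℕ) (a b : ℕ) : Prop :=
  (a, b) ∈ p.sh ∧ ∃ i j, (i, j) ∈ s.sh ∧ inRegion s p η i j a b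

/-- The position map of the occurrence of `p − x` in `p` avoiding the point at
position `x`. -/
def etaDel (p : MeshPattern) (x : ℕ) : ℕ → ℕ := fun i =>
  if 1 ≤ i ∧ i ≤ p.len - 1 then (if i < x then i else i + 1) else 0

/-- The underlying permutation of the pattern obtained from `p` by deleting the point at
position `x`. -/
def delPerm (p : MeshPattern) (x : ℕ) : ℕ → ℕ := fun i =>
  if 1 ≤ i ∧ i ≤ p.len - 1 then
    (if p.perm (etaDel p x i) < p.perm x then p.perm (etaDel p x i)
     else p.perm (etaDel p x i) - 1)
  else 0

/-- `q` is the mesh pattern `p − x` obtained from `p` by deleting the point at position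
`x` (where `1 ≤ x ≤ len p`): the underlying permutation is obtained by deleting that
letter, and a box of `q` is shaded exactly when the corresponding region of `p` (under
the occurrence `etaDel p x`) is entirely shaded and contains no point of `p` in its
interior.  In particular `etaDel p x` is an occurrence of `q` in `p`. -/
def IsDeletion (p : MeshPattern) (x : ℕ) (q : MeshPattern) : Prop :=
  1 ≤ x ∧ x ≤ p.len ∧ q.len + 1 = p.len ∧ q.perm = delPerm p x ∧
    ∀ i j : ℕ, ((i, j) ∈ q.sh ↔ i ≤ q.len ∧ j ≤ q.len ∧
      (∀ a b, inRegion q p (etaDel p x) i j a b → (a, b) ∈ p.sh) ∧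
      ∀ y, 1 ≤ y → y ≤ p.len → ¬ interiorPt q p (etaDel p x) i j y)

/-- Deleting the point at position `x` of `p` (with `q = p − x`) merges shadings:
some shaded box of `q` corresponds to more than one shaded box of `p`. -/
def MergesShadings (p : MeshPattern) (x : ℕ) (q : MeshPattern) : Prop :=
  ∃ i j, (i, j) ∈ q.sh ∧ ∃ a b a' b', (a, b) ≠ (a', b') ∧ (a, b) ∈ p.sh ∧
    (a', b') ∈ p.sh ∧ inRegion q p (etaDel p x) i j a b ∧
    inRegion q p (etaDel p x) i j a' b'

/-- `f 0 ⋖ f 1 ⋖ ⋯ ⋖ f k` is a maximal chain of length `k` from `a` to `b`. -/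
def IsMaxChain (a b : MeshPattern) (k : ℕ) (f : ℕ → MeshPattern) : Prop :=
  f 0 = a ∧ f k = b ∧ ∀ i < k, CovByM (f i) (f (i + 1))

/-- Underlying permutation of the direct sum `s ⊕ t`. -/
def dsumPerm (s t : MeshPattern) : ℕ → ℕ := fun i =>
  if i ≤ s.len then s.perm i
  else if i ≤ s.len + t.len then t.perm (i - s.len) + s.len
  else 0

/-- Shading of the direct sum `s ⊕ t`: the shadings of `s` and of `t` (translated), where
boxes on the shared boundary are extended to the new boundary (north/east for boxes of
`s`, south/west for boxes of `t`). -/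
def dsumSh (s t : MeshPattern) : Finset (ℕ × ℕ) :=
  s.sh ∪ t.sh.image (fun q => (q.1 + s.len, q.2 + s.len)) ∪
    (s.sh.filter (fun q => q.2 = s.len)).biUnion
      (fun q => (Finset.range (t.len + 1)).image (fun k => (q.1, s.len + k))) ∪
    (s.sh.filter (fun q => q.1 = s.len)).biUnion
      (fun q => (Finset.range (t.len + 1)).image (fun k => (s.len + k, q.2))) ∪
    (t.sh.filter (fun q => q.2 = 0)).biUnion
      (fun q => (Finset.range (s.len + 1)).image (fun k => (q.1 + s.len, k))) ∪
    (t.sh.filter (fun q => q.1 = 0)).biUnion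
      (fun q => (Finset.range (s.len + 1)).image (fun k => (k, q.2 + s.len)))

/-- `r = s ⊕ t` is the direct sum of the mesh patterns `s` and `t` (defined when the top
right corner box of `s` and the bottom left corner box of `t` are not shaded). -/
def IsDSum (s t r : MeshPattern) : Prop :=
  (s.len, s.len) ∉ s.sh ∧ (0, 0) ∉ t.sh ∧
    r.len = s.len + t.len ∧ r.perm = dsumPerm s t ∧ r.sh = dsumSh s t

/-- A mesh pattern is indecomposable if it cannot be written as a direct sum `a ⊕ b`
with neither `a` nor `b` equal to it. -/
def Indecomposable (m : MeshPattern) : Prop :=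
  ¬ ∃ s t, s ≠ m ∧ t ≠ m ∧ IsDSum s t m

/-- `SumOfList L m`: `m` is the direct sum of the list `L` of mesh patterns
(the empty list summing to the empty pattern `ε^∅`). -/
def SumOfList : List MeshPattern → MeshPattern → Prop
  | [], m => m.len = 0 ∧ m.sh = ∅
  | [a], m => a = m
  | a :: b :: rest, m => ∃ r, SumOfList (b :: rest) r ∧ IsDSum a r m

/-- Underlying permutation of the skew sum `s ⊖ t`. -/
def sksumPerm (s t : MeshPattern) : ℕ → ℕ := fun i =>
  if i = 0 then 0
  else if i ≤ s.len then s.perm i + t.len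
  else if i ≤ s.len + t.len then t.perm (i - s.len)
  else 0

/-- Shading of the skew sum `s ⊖ t` (s placed to the north west of `t`), with boxes on
the shared boundary extended to the new boundary. -/
def sksumSh (s t : MeshPattern) : Finset (ℕ × ℕ) :=
  s.sh.image (fun q => (q.1, q.2 + t.len)) ∪ t.sh.image (fun q => (q.1 + s.len, q.2)) ∪
    (s.sh.filter (fun q => q.1 = s.len)).biUnion
      (fun q => (Finset.range (t.len + 1)).image (fun k => (s.len + k, q.2 + t.len))) ∪
    (s.sh.filter (fun q => q.2 = 0)).biUnion
      (fun q => (Finset.range (t.len + 1)).image (fun k => (q.1, k))) ∪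
    (t.sh.filter (fun q => q.2 = t.len)).biUnion
      (fun q => (Finset.range (s.len + 1)).image (fun k => (q.1 + s.len, t.len + k))) ∪
    (t.sh.filter (fun q => q.1 = 0)).biUnion
      (fun q => (Finset.range (s.len + 1)).image (fun k => (k, q.2)))

/-- `r = s ⊖ t` is the skew sum of the mesh patterns `s` and `t` (defined when the bottom
right corner box of `s` and the top left corner box of `t` are not shaded). -/
def IsSkewSum (s t r : MeshPattern) : Prop :=
  (s.len, 0) ∉ s.sh ∧ (0, t.len) ∉ t.sh ∧
    r.len = s.len + t.len ∧ r.perm = sksumPerm s t ∧ r.sh = sksumSh s t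

/-- A mesh pattern is skew-indecomposable if it cannot be written as a skew sum `a ⊖ b`
with neither `a` nor `b` equal to it. -/
def SkewIndecomposable (m : MeshPattern) : Prop :=
  ¬ ∃ s t, s ≠ m ∧ t ≠ m ∧ IsSkewSum s t m

/-- Connectivity (zig-zag of comparabilities) inside a subset `I` of the mesh pattern
poset. -/
def ConnIn (I : Set MeshPattern) (a b : MeshPattern) : Prop :=
  Relation.ReflTransGen (fun u v => u ∈ I ∧ v ∈ I ∧ (u ≤ v ∨ v ≤ u)) a b

/-- The interval `[m, p]` is strongly disconnected: its open interior has at least two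
connected components each containing more than one element. -/
def StronglyDisconnectedInterval (m p : MeshPattern) : Prop :=
  ∃ a b, (m < a ∧ a < p) ∧ (m < b ∧ b < p) ∧ ¬ ConnIn {c | m < c ∧ c < p} a b ∧
    (∃ a', (m < a' ∧ a' < p) ∧ a' ≠ a ∧ ConnIn {c | m < c ∧ c < p} a a') ∧
    (∃ b', (m < b' ∧ b' < p) ∧ b' ≠ b ∧ ConnIn {c | m < c ∧ c < p} b b')

/-- The occurrence of `m` in `m ⊕ m` (or `m ⊖ m`) as the first `|m|` points. -/
def eta1 (m : MeshPattern) : ℕ → ℕ := fun i => if 1 ≤ i ∧ i ≤ m.len then i else 0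

/-- The occurrence of `m` in `m ⊕ m` (or `m ⊖ m`) as the last `|m|` points. -/
def eta2 (m : MeshPattern) : ℕ → ℕ := fun i => if 1 ≤ i ∧ i ≤ m.len then i + m.len else 0

/-- `i` (with `2 ≤ i ≤ len`) is the position of an adjacency tail: the letter at
position `i` differs by one from the letter at position `i - 1`. -/
def IsAdjTail (m : MeshPattern) (i : ℕ) : Prop :=
  2 ≤ i ∧ i ≤ m.len ∧ (m.perm i = m.perm (i - 1) + 1 ∨ m.perm (i - 1) = m.perm i + 1)

open Classical in
/-- `adj(cl m)`: the number of adjacency tails of the underlying permutation of `m`. -/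
noncomputable def adjCount (m : MeshPattern) : ℕ :=
  ((Finset.range (m.len + 1)).filter (fun i => IsAdjTail m i)).card

/-- The total number of mesh patterns of length `n`. -/
def Tcount (n : ℕ) : ℕ := n.factorial * 2 ^ ((n + 1) ^ 2)

end MeshPattern

/-- Binary words, partially ordered by (not necessarily contiguous) subword containment:
the poset `𝓦`. -/
structure Word where
  toList : List Bool

instance : LE Word := ⟨fun u w => u.toList.Sublist w.toList⟩

/-- The binary word associated to a mesh pattern `m` in the class `Γ`: it has length
`|m| - 1`, and for each letter `i` with `2 ≤ i ≤ |m|` the corresponding entry is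
`false` (i.e. `0`) if the letter `i` appears before the letter `1` in `cl m`,
and `true` (i.e. `1`) otherwise. -/
noncomputable def MeshPattern.wordOf (m : MeshPattern) : List Bool :=
  (List.range (m.len - 1)).map (fun k => if m.pos (k + 2) < m.pos 1 then false else true)

namespace MeshPattern

/-!
If `m ⋖ p` is impure, every occurrence `η` of `m` in `p` uses every shaded box of `p`: unshading
an unused box would give a pattern strictly between `m` and `p`. Were `m` and `p` of the same
length, the regions of `η` would be single boxes, so `sh p ⊆ sh m`, contradicting impurity. Hence
`η` misses a point `x`, it factors through `p − x`, and the covering forces `m = p − x` and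
`η = η_{p,x}`. The regions of `η_{p,x}` are the fibres of the map `collapseBox p x`, which merges
the two columns and the two rows meeting at `x`. As `p` has more shaded boxes than `m` and all
of them are used, this map is not injective on `sh p`: shadings merge.

Conversely, if `η = η_{p,x}`, then `collapseBox p x` maps `sh p` onto a superset of `sh m` (the
region of a shaded box of `m` is shaded, corner box included), and merging means that it is not
injective; so `|sh p| > |sh m|` while `|p| = |m| + 1`.
-/

-- `skip c` enumerates `ℕ ∖ {c}` increasingly and `collapse c` is its left inverse; they relate
-- the boundaries of `p − x` to those of `p`.
def skip (c i : ℕ) : ℕ := if i < c then i else i + 1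

def collapse (c a : ℕ) : ℕ := if a < c then a else a - 1

section Skip

variable {c i j a : ℕ}

lemma skip_ne : skip c i ≠ c := by
  unfold skip; split_ifs <;> omega

lemma collapse_skip : collapse c (skip c i) = i := by
  unfold skip collapse; split_ifs <;> omega

lemma skip_collapse (h : a ≠ c) : skip c (collapse c a) = a := by
  unfold skip collapse; split_ifs <;> omega

lemma skip_mem_Icc {n : ℕ} (hc : c ≤ n) (h1 : 1 ≤ i) (h2 : i ≤ n - 1) :
    skip c i ∈ Set.Icc 1 n := by
  unfold skip; constructor <;> split_ifs <;> omega

lemma skip_lt_skip_iff : skip c i < skip c j ↔ i < j := by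
  unfold skip; split_ifs <;> omega

lemma skip_le_and_lt_skip_succ_iff (hc : 1 ≤ c) :
    skip c i ≤ a ∧ a < skip c (i + 1) ↔ collapse c a = i := by
  unfold skip collapse; split_ifs <;> omega

end Skip

section StrictMonoOn

variable {f : ℕ → ℕ} {N : ℕ}

lemma add_sub_le_of_strictMonoOn (hf : StrictMonoOn f (Set.Iic N)) {i j : ℕ} (hij : i ≤ j)
    (hj : j ≤ N) : f i + (j - i) ≤ f j := by
  induction j, hij using Nat.le_induction with
  | base => simp
  | succ j hij ih =>
    have := hf (show j ∈ Set.Iic N by simp; omega) (show j + 1 ∈ Set.Iic N from hj) j.lt_succ_self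
    have := ih (by omega)
    omega

lemma eq_self_of_strictMonoOn (hf : StrictMonoOn f (Set.Iic N)) (hN : f N = N) :
    ∀ i ≤ N, f i = i := by
  intro i hi
  have := add_sub_le_of_strictMonoOn hf (Nat.zero_le i) hi
  have := add_sub_le_of_strictMonoOn hf hi le_rfl
  omega

lemma eq_skip_of_strictMonoOn (hf : StrictMonoOn f (Set.Iic N)) (hN : f N = N + 1) {c : ℕ}
    (hc : c ≤ N) (hne : ∀ i ≤ N, f i ≠ c) : ∀ i ≤ N, f i = skip c i := by
  have lower : ∀ i ≤ N, i ≤ f i := fun i hi => by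
    have := add_sub_le_of_strictMonoOn hf (Nat.zero_le i) hi; omega
  have upper : ∀ i ≤ N, f i ≤ i + 1 := fun i hi => by
    have := add_sub_le_of_strictMonoOn hf hi le_rfl; omega
  intro i hi
  unfold skip
  split_ifs with hic
  · have := add_sub_le_of_strictMonoOn hf (show i ≤ c - 1 by omega) (by omega)
    have := upper (c - 1) (by omega)
    have := hne (c - 1) (by omega)
    have := lower i hi
    omega
  · have := add_sub_le_of_strictMonoOn hf (show c ≤ i by omega) hi
    have := lower c hc
    have := hne c hc
    have := upper i hi
    omega

end StrictMonoOn

lemma exists_forall_ne_of_lt (f : ℕ → ℕ) {m n : ℕ} (hmn : m < n) :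
    ∃ x, 1 ≤ x ∧ x ≤ n ∧ ∀ i, 1 ≤ i → i ≤ m → f i ≠ x := by
  have hcard : ((Finset.Icc 1 m).image f).card < (Finset.Icc 1 n).card := by
    have := Finset.card_image_le (s := Finset.Icc 1 m) (f := f)
    simp only [Nat.card_Icc] at this ⊢
    omega
  obtain ⟨x, hx, hxf⟩ := Finset.exists_mem_notMem_of_card_lt_card hcard
  rw [Finset.mem_Icc] at hx
  exact ⟨x, hx.1, hx.2, fun i h1 h2 h => hxf (Finset.mem_image.mpr ⟨i, by simp [h1, h2], h⟩)⟩

lemma pos_spec (m : MeshPattern) {v : ℕ} (h1 : 1 ≤ v) (h2 : v ≤ m.len) :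
    m.perm (m.pos v) = v ∧ 1 ≤ m.pos v ∧ m.pos v ≤ m.len := by
  obtain ⟨i, -, -, hi⟩ := m.perm_surj v h1 h2
  have heq : m.perm (m.pos v) = v := Function.invFun_eq ⟨i, hi⟩
  refine ⟨heq, ?_, ?_⟩ <;> by_contra h <;>
    · have := m.perm_zero (m.pos v) (by omega)
      omega

lemma pos_perm (m : MeshPattern) {i : ℕ} (h1 : 1 ≤ i) (h2 : i ≤ m.len) : m.pos (m.perm i) = i := by
  have hv := m.perm_mem i h1 h2
  obtain ⟨e, e1, e2⟩ := pos_spec m hv.1 hv.2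
  exact m.perm_inj _ _ e1 e2 h1 h2 e

lemma perm_le_len (m : MeshPattern) (y : ℕ) : m.perm y ≤ m.len := by
  by_cases h : 1 ≤ y ∧ y ≤ m.len
  · exact (m.perm_mem y h.1 h.2).2
  · rw [m.perm_zero y (by omega)]; omega

section Boundary

variable {m p : MeshPattern} {η : ℕ → ℕ}

lemma colExt_of_mem {i : ℕ} (h1 : 1 ≤ i) (h2 : i ≤ m.len) : colExt m p η i = η i := by
  simp only [colExt, if_neg (show i ≠ 0 by omega), if_pos h2]

lemma valExt_of_mem {j : ℕ} (h1 : 1 ≤ j) (h2 : j ≤ m.len) :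
    valExt m p η j = p.perm (η (m.pos j)) := by
  simp only [valExt, if_neg (show j ≠ 0 by omega), if_pos h2]

lemma colExt_len_succ : colExt m p η (m.len + 1) = p.len + 1 := by
  simp [colExt]

lemma valExt_len_succ : valExt m p η (m.len + 1) = p.len + 1 := by
  simp [valExt]

lemma valExt_le (j : ℕ) : valExt m p η j ≤ p.len + 1 := by
  have := perm_le_len p (η (m.pos j))
  unfold valExt; split_ifs <;> omega

lemma colExt_le (hmem : ∀ i, 1 ≤ i → i ≤ m.len → η i ≤ p.len) (i : ℕ) :
    colExt m p η i ≤ p.len + 1 := by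
  unfold colExt; split_ifs with h0 h1
  · omega
  · have := hmem i (by omega) h1; omega
  · omega

lemma IsOcc.colExt_strictMonoOn (ho : IsOcc m p η) :
    StrictMonoOn (colExt m p η) (Set.Iic (m.len + 1)) := by
  intro i hi j hj hij
  simp only [Set.mem_Iic] at hi hj
  unfold colExt
  split_ifs <;> first
    | omega
    | exact ho.mono i j (by omega) hij (by omega)
    | have := ho.mem j (by omega) (by omega); omega
    | have := ho.mem i (by omega) (by omega); omega

lemma IsOcc.valExt_strictMonoOn (ho : IsOcc m p η) :
    StrictMonoOn (valExt m p η) (Set.Iic (m.len + 1)) := by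
  intro j hj k hk hjk
  simp only [Set.mem_Iic] at hj hk
  have hval : ∀ l, 1 ≤ l → l ≤ m.len →
      1 ≤ valExt m p η l ∧ valExt m p η l ≤ p.len := fun l h1 h2 => by
    obtain ⟨-, e1, e2⟩ := pos_spec m h1 h2
    have := ho.mem _ e1 e2
    rw [valExt_of_mem h1 h2]
    exact p.perm_mem _ this.1 this.2
  rcases Nat.eq_zero_or_pos j with rfl | hj0
  · rcases Nat.lt_or_ge m.len k with hk' | hk'
    · rw [show k = m.len + 1 by omega, valExt_len_succ]; simp [valExt]
    · have := hval k (by omega) hk'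
      have h0 : valExt m p η 0 = 0 := by simp [valExt]
      omega
  rcases Nat.lt_or_ge m.len k with hk' | hk'
  · rw [show k = m.len + 1 by omega, valExt_len_succ]
    have := hval j hj0 (by omega); omega
  obtain ⟨e1, e2, e3⟩ := pos_spec m hj0 (show j ≤ m.len by omega)
  obtain ⟨f1, f2, f3⟩ := pos_spec m (show 1 ≤ k by omega) hk'
  rw [valExt_of_mem hj0 (by omega), valExt_of_mem (by omega) hk', ← ho.pattern _ _ e2 e3 f2 f3,
    e1, f1]
  exact hjk

lemma IsOcc.len_le (ho : IsOcc m p η) : m.len ≤ p.len := by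
  have := add_sub_le_of_strictMonoOn ho.colExt_strictMonoOn (Nat.zero_le (m.len + 1)) le_rfl
  rw [colExt_len_succ] at this
  omega

lemma IsOcc.eq_of_inRegion_of_len_eq (ho : IsOcc m p η)
    (hlen : m.len = p.len) {c : ℕ × ℕ} (hc : c ∈ m.sh) {a b : ℕ}
    (hr : inRegion m p η c.1 c.2 a b) : (a, b) = c := by
  have hcol := eq_self_of_strictMonoOn ho.colExt_strictMonoOn (by rw [colExt_len_succ, hlen])
  have hval := eq_self_of_strictMonoOn ho.valExt_strictMonoOn (by rw [valExt_len_succ, hlen])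
  have hb := m.sh_mem c hc
  obtain ⟨h1, h2, h3, h4⟩ := hr
  rw [hcol _ (by omega)] at h1 h2
  rw [hval _ (by omega)] at h3 h4
  exact Prod.ext (by omega) (by omega)

end Boundary

section Composition

variable {m q p : MeshPattern} {θ η : ℕ → ℕ}

lemma colExt_comp (hmem : ∀ i, 1 ≤ i → i ≤ m.len → 1 ≤ η i ∧ η i ≤ q.len) (i : ℕ) :
    colExt m p (θ ∘ η) i = colExt q p θ (colExt m q η i) := by
  by_cases hi : 1 ≤ i ∧ i ≤ m.len
  · have := hmem i hi.1 hi.2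
    simp only [colExt_of_mem hi.1 hi.2, Function.comp_apply, colExt_of_mem this.1 this.2]
  · unfold colExt; split_ifs <;> omega

lemma valExt_comp (hmem : ∀ i, 1 ≤ i → i ≤ m.len → 1 ≤ η i ∧ η i ≤ q.len) (j : ℕ) :
    valExt m p (θ ∘ η) j = valExt q p θ (valExt m q η j) := by
  rcases Nat.eq_zero_or_pos j with rfl | hj0
  · simp [valExt]
  rcases Nat.lt_or_ge m.len j with hj | hj
  · simp [valExt, show j ≠ 0 by omega, show ¬ j ≤ m.len by omega]
  obtain ⟨-, e1, e2⟩ := pos_spec m hj0 hj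
  have hη := hmem _ e1 e2
  have hv := q.perm_mem _ hη.1 hη.2
  rw [valExt_of_mem hj0 hj, valExt_of_mem hj0 hj, valExt_of_mem hv.1 hv.2,
    pos_perm q hη.1 hη.2, Function.comp_apply]

/-- The region of the box `(a, b)` of `q` under `θ` lies inside the region of `(i, j)` under
`θ ∘ η`. -/
lemma IsOcc.extents_comp (hθ : IsOcc q p θ)
    (hmem : ∀ i, 1 ≤ i → i ≤ m.len → 1 ≤ η i ∧ η i ≤ q.len) {i j a b : ℕ}
    (hr : inRegion m q η i j a b) :
    colExt m p (θ ∘ η) i ≤ colExt q p θ a ∧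
      colExt q p θ (a + 1) ≤ colExt m p (θ ∘ η) (i + 1) ∧
      valExt m p (θ ∘ η) j ≤ valExt q p θ b ∧
      valExt q p θ (b + 1) ≤ valExt m p (θ ∘ η) (j + 1) := by
  have hc := colExt_le (fun i h1 h2 => (hmem i h1 h2).2) (p := q) (η := η)
  have hv := valExt_le (m := m) (p := q) (η := η)
  have hcm := hθ.colExt_strictMonoOn.monotoneOn
  have hvm := hθ.valExt_strictMonoOn.monotoneOn
  obtain ⟨h1, h2, h3, h4⟩ := hr
  have := hc (i + 1)
  have := hv (j + 1)
  simp only [colExt_comp hmem, valExt_comp hmem]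
  refine ⟨hcm ?_ ?_ h1, hcm ?_ ?_ h2, hvm ?_ ?_ h3, hvm ?_ ?_ h4⟩ <;>
    simp only [Set.mem_Iic] <;> first | exact hc _ | exact hv _ | omega

lemma IsOcc.of_comp (hθ : IsOcc q p θ)
    (hsat : ∀ i j, i ≤ q.len → j ≤ q.len → (∀ a b, inRegion q p θ i j a b → (a, b) ∈ p.sh) →
      (∀ y, 1 ≤ y → y ≤ p.len → ¬ interiorPt q p θ i j y) → (i, j) ∈ q.sh)
    (hzero : ∀ i, i = 0 ∨ m.len < i → η i = 0)
    (hmem : ∀ i, 1 ≤ i → i ≤ m.len → 1 ≤ η i ∧ η i ≤ q.len) (ho : IsOcc m p (θ ∘ η)) :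
    IsOcc m q η := by
  have hθmono : StrictMonoOn θ (Set.Icc 1 q.len) := fun i hi j hj hij =>
    hθ.mono i j hi.1 hij hj.2
  refine ⟨hzero, hmem, fun i j h1 hij hj => ?_, fun i j h1 h2 h3 h4 => ?_,
    fun c hc y hy1 hy2 hy => ?_, fun c hc a b hr => ?_⟩
  · have hi := hmem i h1 (by omega)
    have hj := hmem j (by omega) hj
    exact (hθmono.lt_iff_lt hi hj).mp (ho.mono i j h1 hij (by omega))
  · have hi := hmem i h1 h2
    have hj := hmem j h3 h4
    rw [ho.pattern i j h1 h2 h3 h4]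
    exact (hθ.pattern _ _ hi.1 hi.2 hj.1 hj.2).symm
  · have hθy := hθ.mem y hy1 hy2
    refine ho.no_point c hc (θ y) hθy.1 hθy.2 ?_
    have hcb := colExt_le (fun i h1 h2 => (hmem i h1 h2).2) (p := q) (η := η)
    have hvb := valExt_le (m := m) (p := q) (η := η)
    have hcm := hθ.colExt_strictMonoOn
    have hvm := hθ.valExt_strictMonoOn
    have hqy := q.perm_mem y hy1 hy2
    obtain ⟨h1, h2, h3, h4⟩ := hy
    simp only [interiorPt, colExt_comp hmem, valExt_comp hmem]
    have e1 : colExt q p θ y = θ y := colExt_of_mem hy1 hy2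
    have e2 : valExt q p θ (q.perm y) = p.perm (θ y) := by
      rw [valExt_of_mem hqy.1 hqy.2, pos_perm q hy1 hy2]
    rw [← e2, ← e1]
    refine ⟨(hcm.lt_iff_lt ?_ ?_).mpr h1, (hcm.lt_iff_lt ?_ ?_).mpr h2,
      (hvm.lt_iff_lt ?_ ?_).mpr h3, (hvm.lt_iff_lt ?_ ?_).mpr h4⟩ <;>
      simp only [Set.mem_Iic] <;> first | exact hcb _ | exact hvb _ | omega
  · have hb := m.sh_mem c hc
    have hnest := hθ.extents_comp hmem hr
    have := colExt_le (fun i h1 h2 => (hmem i h1 h2).2) (p := q) (η := η) (c.1 + 1)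
    have := valExt_le (m := m) (p := q) (η := η) (c.2 + 1)
    obtain ⟨-, h2, -, h4⟩ := hr
    refine hsat a b (by omega) (by omega) (fun a' b' hr' => ho.shaded c hc a' b' ?_)
      (fun y hy1 hy2 hy => ho.no_point c hc y hy1 hy2 ?_)
    · unfold inRegion at hr' ⊢; omega
    · unfold interiorPt at hy ⊢; omega

end Composition

lemma reshade_le (p : MeshPattern) (A : Finset (ℕ × ℕ)) (hA : A ⊆ p.sh) :
    reshade p A hA ≤ p := by
  set z := reshade p A hA
  -- `eta1 p` is the identity embedding of the positions of `p`.
  have hzl : z.len = p.len := rfl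
  have hι : ∀ i, 1 ≤ i → i ≤ p.len → eta1 p i = i := fun i h1 h2 => if_pos ⟨h1, h2⟩
  have hcol : ∀ i ≤ p.len + 1, colExt z p (eta1 p) i = i := fun i hi => by
    simp only [colExt, eta1]; split_ifs <;> omega
  have hval : ∀ j ≤ p.len + 1, valExt z p (eta1 p) j = j := fun j hj => by
    rcases Nat.eq_zero_or_pos j with rfl | hj0
    · simp [valExt]
    rcases Nat.lt_or_ge p.len j with hj' | hj'
    · simp only [valExt, if_neg (show j ≠ 0 by omega), if_neg (show ¬ j ≤ z.len by omega)]
      omega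
    obtain ⟨e1, e2, e3⟩ := pos_spec z hj0 hj'
    rw [valExt_of_mem (m := z) hj0 hj', hι _ e2 e3]
    exact e1
  refine ⟨eta1 p, fun i hi => ?_, fun i h1 h2 => ?_, fun i j h1 hij hj => ?_,
    fun i j h1 h2 h3 h4 => ?_, fun c hc y hy1 hy2 hy => ?_, fun c hc a b hr => ?_⟩
  · exact if_neg (by omega)
  · rw [hι i h1 h2]; omega
  · rw [hι i h1 (by omega), hι j (by omega) hj]; exact hij
  · rw [hι i h1 h2, hι j h3 h4]; rfl
  · have hb := z.sh_mem c hc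
    obtain ⟨h1, h2, -, -⟩ := hy
    rw [hcol c.1 (by omega)] at h1
    rw [hcol (c.1 + 1) (by omega)] at h2
    omega
  · have hb := z.sh_mem c hc
    obtain ⟨h1, h2, h3, h4⟩ := hr
    rw [hcol c.1 (by omega)] at h1
    rw [hcol (c.1 + 1) (by omega)] at h2
    rw [hval c.2 (by omega)] at h3
    rw [hval (c.2 + 1) (by omega)] at h4
    have : (a, b) = c := Prod.ext (by omega) (by omega)
    exact hA (this ▸ hc)

lemma IsOcc.reshade {m p : MeshPattern} {η : ℕ → ℕ} (ho : IsOcc m p η) {A : Finset (ℕ × ℕ)}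
    (hA : A ⊆ p.sh) (hused : ∀ c ∈ m.sh, ∀ a b, inRegion m p η c.1 c.2 a b → (a, b) ∈ A) :
    IsOcc m (reshade p A hA) η :=
  ⟨ho.zero, ho.mem, ho.mono, ho.pattern, ho.no_point, hused⟩

lemma CovByM.eq_of_le_of_lt {m p z : MeshPattern} (hcov : CovByM m p) (hmz : m ≤ z)
    (hzp : z < p) : m = z := by
  by_contra hne
  exact hcov.2 ⟨z, ⟨hmz, hne⟩, hzp⟩

lemma CovByM.usesBox {m p : MeshPattern} (hcov : CovByM m p) (hdim : m.dim + 1 < p.dim)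
    {η : ℕ → ℕ} (ho : IsOcc m p η) {a b : ℕ} (hab : (a, b) ∈ p.sh) : UsesBox m p η a b := by
  refine ⟨hab, ?_⟩
  by_contra hunused
  have hsub : p.sh.erase (a, b) ⊆ p.sh := Finset.erase_subset _ _
  have hmz : m ≤ reshade p _ hsub := ⟨η, ho.reshade hsub fun c hc a' b' hr =>
    Finset.mem_erase.mpr ⟨fun h => hunused ⟨c.1, c.2, hc, by
      obtain ⟨rfl, rfl⟩ := Prod.mk.inj h; exact hr⟩, ho.shaded c hc a' b' hr⟩⟩
  have hdimz : (reshade p _ hsub).dim + 1 = p.dim := by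
    have := Finset.card_erase_add_one hab
    simp only [dim, reshade]
    omega
  have hzp : reshade p _ hsub < p := ⟨reshade_le p _ hsub, fun h => by rw [h] at hdimz; omega⟩
  rw [← hcov.eq_of_le_of_lt hmz hzp] at hdimz
  omega

section Deletion

variable {p : MeshPattern} {x : ℕ}

lemma etaDel_of_mem {i : ℕ} (h1 : 1 ≤ i) (h2 : i ≤ p.len - 1) : etaDel p x i = skip x i := by
  simp only [etaDel, skip, if_pos (And.intro h1 h2)]

lemma etaDel_of_not_mem {i : ℕ} (h : i = 0 ∨ p.len - 1 < i) : etaDel p x i = 0 := by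
  simp only [etaDel, if_neg (show ¬(1 ≤ i ∧ i ≤ p.len - 1) by omega)]

lemma perm_skip_ne (hx1 : 1 ≤ x) (hx2 : x ≤ p.len) {i : ℕ} (h1 : 1 ≤ i) (h2 : i ≤ p.len - 1) :
    p.perm (skip x i) ≠ p.perm x := fun h =>
  skip_ne (p.perm_inj _ _ (skip_mem_Icc hx2 h1 h2).1 (skip_mem_Icc hx2 h1 h2).2 hx1 hx2 h)

lemma delPerm_of_mem {i : ℕ} (h1 : 1 ≤ i) (h2 : i ≤ p.len - 1) :
    delPerm p x i = collapse (p.perm x) (p.perm (skip x i)) := by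
  simp only [delPerm, collapse, if_pos (And.intro h1 h2), etaDel_of_mem h1 h2]

lemma perm_etaDel (hx1 : 1 ≤ x) (hx2 : x ≤ p.len) {i : ℕ} (h1 : 1 ≤ i) (h2 : i ≤ p.len - 1) :
    p.perm (etaDel p x i) = skip (p.perm x) (delPerm p x i) := by
  rw [delPerm_of_mem h1 h2, skip_collapse (perm_skip_ne hx1 hx2 h1 h2), etaDel_of_mem h1 h2]

lemma delPerm_mem (hx1 : 1 ≤ x) (hx2 : x ≤ p.len) {i : ℕ} (h1 : 1 ≤ i) (h2 : i ≤ p.len - 1) :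
    1 ≤ delPerm p x i ∧ delPerm p x i ≤ p.len - 1 := by
  have hs := skip_mem_Icc hx2 h1 h2
  have := p.perm_mem _ hs.1 hs.2
  have := p.perm_mem x hx1 hx2
  have := perm_skip_ne hx1 hx2 h1 h2
  rw [delPerm_of_mem h1 h2]; unfold collapse; split_ifs <;> omega

variable (p x) in
def delBase (hx1 : 1 ≤ x) (hx2 : x ≤ p.len) : MeshPattern where
  len := p.len - 1
  perm := delPerm p x
  sh := ∅
  perm_mem _ h1 h2 := delPerm_mem hx1 hx2 h1 h2
  perm_zero i h := by simp only [delPerm, if_neg (show ¬(1 ≤ i ∧ i ≤ p.len - 1) by omega)]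
  perm_inj i j h1 h2 h3 h4 h := by
    have := congrArg (skip (p.perm x)) h
    rw [delPerm_of_mem h1 h2, delPerm_of_mem h3 h4, skip_collapse (perm_skip_ne hx1 hx2 h1 h2),
      skip_collapse (perm_skip_ne hx1 hx2 h3 h4)] at this
    have hi := skip_mem_Icc hx2 h1 h2
    have hj := skip_mem_Icc hx2 h3 h4
    have := p.perm_inj _ _ hi.1 hi.2 hj.1 hj.2 this
    simpa only [collapse_skip] using congrArg (collapse x) this
  perm_surj v h1 h2 := by
    have hX := p.perm_mem x hx1 hx2
    obtain ⟨hw1, hw2⟩ := skip_mem_Icc hX.2 h1 h2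
    obtain ⟨y, hy1, hy2, hy⟩ := p.perm_surj _ hw1 hw2
    have hyx : y ≠ x := fun h => skip_ne (by rw [← hy, h])
    have hc : 1 ≤ collapse x y ∧ collapse x y ≤ p.len - 1 := by
      unfold collapse; split_ifs <;> omega
    refine ⟨collapse x y, hc.1, hc.2, ?_⟩
    rw [delPerm_of_mem hc.1 hc.2, skip_collapse hyx, hy, collapse_skip]
  sh_mem := by simp

open Classical in
-- Regions only depend on the length and the permutation, so they are computed in `delBase`.
noncomputable def delSh (p : MeshPattern) (x : ℕ) (hx1 : 1 ≤ x) (hx2 : x ≤ p.len) :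
    Finset (ℕ × ℕ) :=
  (Finset.range p.len ×ˢ Finset.range p.len).filter fun ij =>
    (∀ a b, inRegion (delBase p x hx1 hx2) p (etaDel p x) ij.1 ij.2 a b → (a, b) ∈ p.sh) ∧
    ∀ y, 1 ≤ y → y ≤ p.len → ¬ interiorPt (delBase p x hx1 hx2) p (etaDel p x) ij.1 ij.2 y

noncomputable def delPattern (p : MeshPattern) (x : ℕ) (hx1 : 1 ≤ x) (hx2 : x ≤ p.len) :
    MeshPattern where
  __ := delBase p x hx1 hx2
  sh := delSh p x hx1 hx2
  sh_mem q hq := by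
    simp only [delSh, Finset.mem_filter, Finset.mem_product, Finset.mem_range] at hq
    exact ⟨Nat.le_sub_one_of_lt hq.1.1, Nat.le_sub_one_of_lt hq.1.2⟩

lemma delPattern_isDeletion (hx1 : 1 ≤ x) (hx2 : x ≤ p.len) :
    IsDeletion p x (delPattern p x hx1 hx2) := by
  refine ⟨hx1, hx2, show p.len - 1 + 1 = p.len by omega, rfl, fun i j => ?_⟩
  show (i, j) ∈ delSh p x hx1 hx2 ↔ i ≤ p.len - 1 ∧ j ≤ p.len - 1 ∧ _
  simp only [delSh, Finset.mem_filter, Finset.mem_product, Finset.mem_range]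
  constructor
  · rintro ⟨⟨hi, hj⟩, h⟩; exact ⟨by omega, by omega, h⟩
  · rintro ⟨hi, hj, h⟩; exact ⟨⟨by omega, by omega⟩, h⟩

lemma IsDeletion.isOcc {q : MeshPattern} (hq : IsDeletion p x q) : IsOcc q p (etaDel p x) := by
  obtain ⟨hx1, hx2, hlen, hperm, hsh⟩ := hq
  refine ⟨fun i h => etaDel_of_not_mem (by omega), fun i h1 h2 => ?_, fun i j h1 hij hj => ?_,
    fun i j h1 h2 h3 h4 => ?_, fun c hc => ((hsh c.1 c.2).1 hc).2.2.2,
    fun c hc => ((hsh c.1 c.2).1 hc).2.2.1⟩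
  · rw [etaDel_of_mem h1 (by omega)]; exact skip_mem_Icc hx2 h1 (by omega)
  · rw [etaDel_of_mem h1 (by omega), etaDel_of_mem (by omega) (by omega), skip_lt_skip_iff]
    exact hij
  · rw [perm_etaDel hx1 hx2 h1 (by omega), perm_etaDel hx1 hx2 h3 (by omega), skip_lt_skip_iff,
      hperm]

lemma len_add_one_of_isOcc_etaDel {m : MeshPattern} (ho : IsOcc m p (etaDel p x)) (hx1 : 1 ≤ x)
    (hx2 : x ≤ p.len) : m.len + 1 = p.len := by
  by_contra hne
  rcases Nat.lt_or_ge (m.len + 1) p.len with h | h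
  · have h0 := ho.zero (m.len + 1) (by omega)
    rw [etaDel_of_mem (by omega) (by omega)] at h0
    have := (skip_mem_Icc hx2 (i := m.len + 1) (by omega) (by omega)).1
    omega
  · have := (ho.mem m.len (by omega) le_rfl).1
    rw [etaDel_of_not_mem (by omega)] at this
    omega

lemma etaDel_ne {i : ℕ} (h1 : 1 ≤ i) (h2 : i ≤ p.len - 1) : etaDel p x i ≠ x := by
  rw [etaDel_of_mem h1 h2]; exact skip_ne

lemma IsDeletion.le_of_isOcc {m q : MeshPattern} {η : ℕ → ℕ} (hq : IsDeletion p x q)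
    (ho : IsOcc m p η) (hxη : ∀ i, 1 ≤ i → i ≤ m.len → η i ≠ x) : m ≤ q := by
  have hθ := hq.isOcc
  obtain ⟨hx1, hx2, hlen, -, hsh⟩ := hq
  let η' : ℕ → ℕ := fun i => if 1 ≤ i ∧ i ≤ m.len then collapse x (η i) else 0
  have hmem : ∀ i, 1 ≤ i → i ≤ m.len → 1 ≤ η' i ∧ η' i ≤ q.len := fun i h1 h2 => by
    have := ho.mem i h1 h2
    have := hxη i h1 h2
    simp only [η', if_pos (And.intro h1 h2), collapse]
    split_ifs <;> omega
  have hfac : etaDel p x ∘ η' = η := by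
    funext i
    by_cases hi : 1 ≤ i ∧ i ≤ m.len
    · have := hmem i hi.1 hi.2
      rw [Function.comp_apply, etaDel_of_mem this.1 (by omega)]
      simp only [η', if_pos hi, skip_collapse (hxη i hi.1 hi.2)]
    · simp only [Function.comp_apply, η', if_neg hi, ho.zero i (by omega)]
      exact etaDel_of_not_mem (Or.inl rfl)
  refine ⟨η', hθ.of_comp (fun i j hi hj hs he => (hsh i j).mpr ⟨hi, hj, hs, he⟩)
    (fun i hi => ?_) hmem (hfac ▸ ho)⟩
  simp only [η', if_neg (show ¬(1 ≤ i ∧ i ≤ m.len) by omega)]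

end Deletion

/-- The box of `p − x` whose region in `p` contains the box `ab` of `p`. -/
def collapseBox (p : MeshPattern) (x : ℕ) (ab : ℕ × ℕ) : ℕ × ℕ :=
  (collapse x ab.1, collapse (p.perm x) ab.2)

section Regions

variable {m p : MeshPattern} {η : ℕ → ℕ} {x : ℕ}

lemma IsOcc.colExt_eq_skip (ho : IsOcc m p η) (hlen : m.len + 1 = p.len) (hx1 : 1 ≤ x)
    (hx2 : x ≤ p.len) (hxη : ∀ i, 1 ≤ i → i ≤ m.len → η i ≠ x) :
    ∀ i ≤ m.len + 1, colExt m p η i = skip x i := by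
  refine eq_skip_of_strictMonoOn ho.colExt_strictMonoOn (by rw [colExt_len_succ, hlen])
    (by omega) fun i hi => ?_
  unfold colExt
  split_ifs with h0 h1
  · omega
  · exact hxη i (by omega) h1
  · omega

lemma IsOcc.valExt_eq_skip (ho : IsOcc m p η) (hlen : m.len + 1 = p.len) (hx1 : 1 ≤ x)
    (hx2 : x ≤ p.len) (hxη : ∀ i, 1 ≤ i → i ≤ m.len → η i ≠ x) :
    ∀ j ≤ m.len + 1, valExt m p η j = skip (p.perm x) j := by
  have hX := p.perm_mem x hx1 hx2
  refine eq_skip_of_strictMonoOn ho.valExt_strictMonoOn (by rw [valExt_len_succ, hlen])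
    (by omega) fun j hj => ?_
  unfold valExt
  split_ifs with h0 h1
  · omega
  · obtain ⟨-, e1, e2⟩ := pos_spec m (by omega) h1
    have hm := ho.mem _ e1 e2
    exact fun h => hxη _ e1 e2 (p.perm_inj _ _ hm.1 hm.2 hx1 hx2 h)
  · omega

lemma IsOcc.inRegion_iff_collapseBox (ho : IsOcc m p η) (hlen : m.len + 1 = p.len)
    (hx1 : 1 ≤ x) (hx2 : x ≤ p.len) (hxη : ∀ i, 1 ≤ i → i ≤ m.len → η i ≠ x) {i j : ℕ}
    (hi : i ≤ m.len) (hj : j ≤ m.len) (a b : ℕ) :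
    inRegion m p η i j a b ↔ collapseBox p x (a, b) = (i, j) := by
  have hcol := ho.colExt_eq_skip hlen hx1 hx2 hxη
  have hval := ho.valExt_eq_skip hlen hx1 hx2 hxη
  rw [inRegion, hcol i (by omega), hcol (i + 1) (by omega), hval j (by omega),
    hval (j + 1) (by omega), collapseBox, Prod.mk.injEq, ← and_assoc,
    skip_le_and_lt_skip_succ_iff hx1, skip_le_and_lt_skip_succ_iff (p.perm_mem x hx1 hx2).1]

lemma IsOcc.eq_etaDel (ho : IsOcc m p η) (hlen : m.len + 1 = p.len) (hx1 : 1 ≤ x)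
    (hx2 : x ≤ p.len) (hxη : ∀ i, 1 ≤ i → i ≤ m.len → η i ≠ x) : η = etaDel p x := by
  funext i
  by_cases hi : 1 ≤ i ∧ i ≤ m.len
  · rw [← colExt_of_mem (p := p) (η := η) hi.1 hi.2,
      ho.colExt_eq_skip hlen hx1 hx2 hxη i (by omega), etaDel_of_mem hi.1 (by omega)]
  · rw [ho.zero i (by omega), etaDel_of_not_mem (by omega)]

lemma IsDeletion.inRegion_iff_collapseBox {q : MeshPattern} (hq : IsDeletion p x q) {i j : ℕ}
    (hi : i ≤ q.len) (hj : j ≤ q.len) (a b : ℕ) :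
    inRegion q p (etaDel p x) i j a b ↔ collapseBox p x (a, b) = (i, j) :=
  hq.isOcc.inRegion_iff_collapseBox hq.2.2.1 hq.1 hq.2.1
    (fun _ h1 h2 => etaDel_ne h1 (by have := hq.2.2.1; omega)) hi hj a b

end Regions

section Merging

variable {m p q : MeshPattern} {x : ℕ}

lemma IsDeletion.mergesShadings_of_card_lt (hq : IsDeletion p x q)
    (hused : ∀ a b, (a, b) ∈ p.sh → UsesBox q p (etaDel p x) a b)
    (hcard : q.sh.card < p.sh.card) : MergesShadings p x q := by
  have himage : p.sh.image (collapseBox p x) ⊆ q.sh := by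
    intro c hc
    obtain ⟨ab, hab, rfl⟩ := Finset.mem_image.mp hc
    obtain ⟨-, i, j, hij, hr⟩ := hused ab.1 ab.2 hab
    have hb := q.sh_mem _ hij
    rwa [(hq.inRegion_iff_collapseBox hb.1 hb.2 _ _).mp hr]
  have hninj : ¬ Set.InjOn (collapseBox p x) p.sh := fun hinj => by
    have := Finset.card_le_card himage
    rw [Finset.card_image_of_injOn hinj] at this
    omega
  simp only [Set.InjOn, not_forall] at hninj
  obtain ⟨c, hc, c', hc', heq, hne⟩ := hninj
  have hcq : collapseBox p x c ∈ q.sh := himage (Finset.mem_image_of_mem _ hc)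
  have hb := q.sh_mem _ hcq
  refine ⟨_, _, hcq, c.1, c.2, c'.1, c'.2, hne, hc, hc',
    (hq.inRegion_iff_collapseBox hb.1 hb.2 _ _).mpr rfl,
    (hq.inRegion_iff_collapseBox hb.1 hb.2 _ _).mpr heq.symm⟩

lemma IsDeletion.card_sh_lt_of_mergesShadings (hq : IsDeletion p x q)
    (ho : IsOcc m p (etaDel p x)) (hmerge : MergesShadings p x q) : m.sh.card < p.sh.card := by
  have hlen := len_add_one_of_isOcc_etaDel ho hq.1 hq.2.1
  have hsub : m.sh ⊆ p.sh.image (collapseBox p x) := by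
    intro c hc
    have hb := m.sh_mem c hc
    have hcorner : collapseBox p x (skip x c.1, skip (p.perm x) c.2) = c := by
      simp only [collapseBox, collapse_skip]
    have hr := (ho.inRegion_iff_collapseBox hlen hq.1 hq.2.1
      (fun _ h1 h2 => etaDel_ne h1 (by omega)) hb.1 hb.2 _ _).mpr hcorner
    exact Finset.mem_image.mpr ⟨_, ho.shaded c hc _ _ hr, hcorner⟩
  have hninj : ¬ Set.InjOn (collapseBox p x) p.sh := by
    obtain ⟨i, j, hij, a, b, a', b', hne, hab, hab', hr, hr'⟩ := hmerge
    have hb := q.sh_mem _ hij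
    exact fun hinj => hne (hinj hab hab'
      (((hq.inRegion_iff_collapseBox hb.1 hb.2 a b).mp hr).trans
        ((hq.inRegion_iff_collapseBox hb.1 hb.2 a' b').mp hr').symm))
  calc m.sh.card ≤ (p.sh.image (collapseBox p x)).card := Finset.card_le_card hsub
    _ < p.sh.card := lt_of_le_of_ne Finset.card_image_le (mt Finset.card_image_iff.mp hninj)

end Merging

section Covering

variable {m p : MeshPattern} {η : ℕ → ℕ}

lemma CovByM.len_lt (hcov : CovByM m p) (hdim : m.dim + 1 < p.dim) (ho : IsOcc m p η) :
    m.len < p.len := by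
  refine lt_of_le_of_ne ho.len_le fun hlen => ?_
  have hsub : p.sh ⊆ m.sh := fun ⟨a, b⟩ hab => by
    obtain ⟨-, i, j, hij, hr⟩ := hcov.usesBox hdim ho hab
    rwa [ho.eq_of_inRegion_of_len_eq hlen hij hr]
  have := Finset.card_le_card hsub
  simp only [dim] at hdim
  omega

lemma CovByM.isDeletion (hcov : CovByM m p) (ho : IsOcc m p η) {x : ℕ} (hx1 : 1 ≤ x)
    (hx2 : x ≤ p.len) (hxη : ∀ i, 1 ≤ i → i ≤ m.len → η i ≠ x) : IsDeletion p x m := by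
  have hdel := delPattern_isDeletion hx1 hx2
  have hlt : delPattern p x hx1 hx2 < p := ⟨⟨_, hdel.isOcc⟩, fun h => by
    have := hdel.2.2.1
    rw [h] at this
    omega⟩
  rwa [hcov.eq_of_le_of_lt (hdel.le_of_isOcc ho hxη) hlt]

end Covering

/-- A cover `m ⋖ p` is impure (`dim p - dim m > 1`) iff every occurrence of `m` in `p`
uses all the shaded boxes of `p` and is obtained by deleting a point of `p` whose
deletion merges shadings. -/
theorem impure_edge_iff (m p : MeshPattern) (hcov : CovByM m p) :
    m.dim + 1 < p.dim ↔
      ∀ η, IsOcc m p η →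
        (∀ a b, (a, b) ∈ p.sh → UsesBox m p η a b) ∧
        ∃ x q, IsDeletion p x q ∧ η = etaDel p x ∧ MergesShadings p x q := by
  constructor
  · intro hdim η ho
    have hused : ∀ a b, (a, b) ∈ p.sh → UsesBox m p η a b := fun a b => hcov.usesBox hdim ho
    obtain ⟨x, hx1, hx2, hxη⟩ := exists_forall_ne_of_lt η (hcov.len_lt hdim ho)
    have hdel := hcov.isDeletion ho hx1 hx2 hxη
    obtain rfl := ho.eq_etaDel hdel.2.2.1 hx1 hx2 hxη
    refine ⟨hused, x, m, hdel, rfl, hdel.mergesShadings_of_card_lt hused ?_⟩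
    have := hdel.2.2.1
    simp only [dim] at hdim
    omega
  · intro h
    obtain ⟨η, ho⟩ := hcov.1.1
    obtain ⟨-, x, q, hq, rfl, hmerge⟩ := h η ho
    have := hq.card_sh_lt_of_mergesShadings ho hmerge
    have := len_add_one_of_isOcc_etaDel ho hq.1 hq.2.1
    simp only [dim]
    omega

end MeshPattern
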